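/- arXiv:2603.15190 — 6 statements merged into one kernel-verified Lean document; each statement's English description precedes it below -/
import Mathlib

section
/- Let q ≥ 1, N ≥ 0 and 0 ≤ t ≤ N be integers, let γ ∈ (0,1] be real, and let α : S_{q,N} → ℂ be a function with ∑_{n ∈ S_{q,N}} |α(n)|² = 1. Then ∑_{r=0}^{t} ∑_{r̲ ∈ S_{q,r}} (1−γ)^{N−r} γ^{r} ∑_{n ∈ S_{q,N}} |α(n)|² ∏_{i=0}^{q−1} C(n_i, r̲_i) = ∑_{r=0}^{t} C(N, r) γ^{r} (1−γ)^{N−r}, where C(a,b) denotes the binomial coefficient. -/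
/-!
For a fixed occupation vector `n` with `∑ i, n i = N`, the multivariate Vandermonde identity
`∑_{r̲ ∈ S_{q,r}} ∏ i, C(n i, r̲ i) = C(N, r)` (compare coefficients of `X ^ r` in
`∏ i, (1 + X) ^ n i = (1 + X) ^ N`) makes the `r`-th term independent of `n`. Summing against the
normalized weights `‖α n‖ ^ 2` then leaves exactly `C(N, r) γ ^ r (1 - γ) ^ (N - r)`.
-/

open scoped BigOperators

/-- The discrete simplex `S_{q,N}`: q-tuples of nonnegative integers summing to `N`. -/
def simplex (q N : ℕ) : Finset (Fin q → ℕ) := Finset.Nat.antidiagonalTuple q N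

open Finset

theorem Finset.sum_piAntidiag_prod_choose {ι : Type*} [DecidableEq ι] (s : Finset ι)
    (n : ι → ℕ) (r : ℕ) :
    ∑ k ∈ s.piAntidiag r, ∏ i ∈ s, (n i).choose (k i) = (∑ i ∈ s, n i).choose r := by
  induction s using Finset.cons_induction generalizing r with
  | empty => rcases r with _ | r <;> simp
  | cons a s ha ih =>
    rw [piAntidiag_cons, sum_disjiUnion, sum_cons, Nat.add_choose_eq]
    refine sum_congr rfl fun p _ => ?_
    rw [sum_map, ← ih, mul_sum]
    refine sum_congr rfl fun k hk => ?_
    have hka : k a = 0 := by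
      by_contra h
      exact ha ((mem_piAntidiag.1 hk).2 a h)
    rw [prod_cons]
    congr 1
    · simp [hka]
    · refine prod_congr rfl fun j hj => ?_
      have hja : j ≠ a := fun h => ha (h ▸ hj)
      simp [hja]

theorem sum_simplex_prod_choose {q N : ℕ} {n : Fin q → ℕ} (hn : n ∈ simplex q N) (r : ℕ) :
    ∑ rv ∈ simplex q r, ∏ i, ((n i).choose (rv i) : ℝ) = N.choose r := by
  rw [simplex, Nat.mem_antidiagonalTuple] at hn
  rw [simplex, ← piAntidiag_univ_fin_eq_antidiagonalTuple, ← hn]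
  exact_mod_cast sum_piAntidiag_prod_choose univ n r

theorem sum_simplex_sum_mul_prod_choose (q N r : ℕ) (w : (Fin q → ℕ) → ℝ) :
    ∑ rv ∈ simplex q r, ∑ n ∈ simplex q N, w n * ∏ i, ((n i).choose (rv i) : ℝ)
      = N.choose r * ∑ n ∈ simplex q N, w n := by
  rw [sum_comm, mul_sum]
  refine sum_congr rfl fun n hn => ?_
  rw [← mul_sum, sum_simplex_prod_choose hn, mul_comm]

theorem code_fidelity_universal_general (q N t : ℕ)
    (γ : ℝ)
    (α : (Fin q → ℕ) → ℂ)
    (hα : ∑ n ∈ simplex q N, ‖α n‖ ^ 2 = 1) :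
    ∑ r ∈ Finset.range (t + 1), ∑ rv ∈ simplex q r,
        (1 - γ) ^ (N - r) * γ ^ r *
          ∑ n ∈ simplex q N,
            ‖α n‖ ^ 2 * ∏ i, ((n i).choose (rv i) : ℝ)
      = ∑ r ∈ Finset.range (t + 1), (N.choose r : ℝ) * γ ^ r * (1 - γ) ^ (N - r) := by
  refine sum_congr rfl fun r _ => ?_
  rw [← mul_sum, sum_simplex_sum_mul_prod_choose, hα]
  ring

/-- The "code fidelity" is a universal constant: for any normalized amplitude function on the
simplex, the truncated amplitude-damping weight sum equals the binomial tail probability. -/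
theorem code_fidelity_universal (q N t : ℕ) (hq : 1 ≤ q) (ht : t ≤ N)
    (γ : ℝ) (hγ0 : 0 < γ) (hγ1 : γ ≤ 1)
    (α : (Fin q → ℕ) → ℂ)
    (hα : ∑ n ∈ simplex q N, ‖α n‖ ^ 2 = 1) :
    ∑ r ∈ Finset.range (t + 1), ∑ rv ∈ simplex q r,
        (1 - γ) ^ (N - r) * γ ^ r *
          ∑ n ∈ simplex q N,
            ‖α n‖ ^ 2 * ∏ i, ((n i).choose (rv i) : ℝ)
      = ∑ r ∈ Finset.range (t + 1), (N.choose r : ℝ) * γ ^ r * (1 - γ) ^ (N - r) :=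
  code_fidelity_universal_general q N t γ α hα
end

section
/- Mean absolute value of a symmetric Skellam random variable: Let λ > 0 and let X and Z be independent Poisson(λ) random variables. Then E[|X − Z|] = 2λ·e^{−2λ}·(I₀(2λ) + I₁(2λ)). -/
/-!
By symmetry `E|X - Z| = 2 E[(X - Z)⁺] = 2 (E[X; X > Z] - E[Z; X > Z])`. Stein's identity
`E[X g(X)] = λ E[g(X + 1)]`, applied to each of the two Poisson variables, turns this into
`2λ (P(X ≥ Z) - P(X ≥ Z + 2)) = 2λ (P(X = Z) + P(X = Z + 1))`. Finally
`P(X - Z = k) = e^{-2λ} I_k(2λ)` for `k = 0, 1`: there `cos (kθ) = cos θ ^ k`, so expanding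
`exp (2λ cos θ)` and integrating termwise against Wallis' integrals gives
`I_k(2λ) = ∑ λ^(2n+k) / (n! (n+k)!)`.
-/

open scoped BigOperators

/-- The modified Bessel function of the first kind of integer order `k`. -/
noncomputable def besselI (k : ℕ) (x : ℝ) : ℝ :=
  (1 / Real.pi) * ∫ θ in (0 : ℝ)..Real.pi, Real.exp (x * Real.cos θ) * Real.cos (k * θ)

open Real Nat

lemma integral_cos_pow_add_two (n : ℕ) :
    ∫ θ in 0..π, cos θ ^ (n + 2) = (n + 1) / (n + 2) * ∫ θ in 0..π, cos θ ^ n := by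
  simp [integral_cos_pow]

lemma integral_cos_pow_odd (r : ℕ) : ∫ θ in 0..π, cos θ ^ (2 * r + 1) = 0 := by
  induction r with
  | zero => simp
  | succ r ih => rw [show 2 * (r + 1) + 1 = 2 * r + 1 + 2 by ring, integral_cos_pow_add_two, ih,
      mul_zero]

lemma integral_cos_pow_even (r : ℕ) :
    ∫ θ in 0..π, cos θ ^ (2 * r) = π * (2 * r)! / (4 ^ r * r ! ^ 2) := by
  induction r with
  | zero => simp
  | succ r ih =>
    rw [show 2 * (r + 1) = 2 * r + 2 by ring, integral_cos_pow_add_two, ih, factorial_succ,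
      factorial_succ, factorial_succ]
    push_cast
    field_simp
    ring

lemma hasSum_integral_exp_mul_cos_mul_cos_pow (x a b : ℝ) (k : ℕ) :
    HasSum (fun j ↦ x ^ j / j ! * ∫ θ in a..b, cos θ ^ (j + k))
      (∫ θ in a..b, exp (x * cos θ) * cos θ ^ k) := by
  simp_rw [← intervalIntegral.integral_const_mul]
  refine intervalIntegral.hasSum_integral_of_dominated_convergence (fun j _ ↦ |x| ^ j / j !)
    (fun j ↦ by fun_prop) (fun j ↦ .of_forall fun θ _ ↦ ?_)
    (.of_forall fun _ _ ↦ summable_pow_div_factorial |x|) intervalIntegrable_const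
    (.of_forall fun θ _ ↦ ?_)
  · have hcos : |cos θ ^ (j + k)| ≤ 1 := by
      rw [abs_pow]
      exact pow_le_one₀ (abs_nonneg _) (abs_cos_le_one θ)
    rw [Real.norm_eq_abs, abs_mul, abs_div, abs_pow, Nat.abs_cast]
    exact mul_le_of_le_one_right (by positivity) hcos
  · have hterm : (fun j ↦ x ^ j / j ! * cos θ ^ (j + k)) =
        fun j ↦ (x * cos θ) ^ j / j ! * cos θ ^ k := by
      funext j
      ring
    rw [hterm, exp_eq_exp_ℝ]
    exact (NormedSpace.expSeries_div_hasSum_exp (x * cos θ)).mul_right _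

lemma besselI_eq_integral_cos_pow {k : ℕ} (hk : k ≤ 1) (x : ℝ) :
    besselI k x = π⁻¹ * ∫ θ in 0..π, exp (x * cos θ) * cos θ ^ k := by
  interval_cases k <;> simp [besselI]

lemma tsum_eq_tsum_two_mul_add_of_odd {α : Type*} [AddCommMonoid α] [TopologicalSpace α]
    {f : ℕ → α} {k : ℕ} (hk : k ≤ 1) (hf : ∀ j, Odd (j + k) → f j = 0) :
    ∑' j, f j = ∑' n, f (2 * n + k) := by
  have hinj : Function.Injective fun n ↦ 2 * n + k := fun m n h ↦ by simpa using h
  refine (hinj.tsum_eq fun j hj ↦ ?_).symm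
  obtain ⟨r, hr | hr⟩ := Nat.even_or_odd' (j + k)
  · exact ⟨r - k, by simp only; omega⟩
  · exact absurd (hf j ⟨r, hr⟩) hj

lemma besselI_two_mul_eq_tsum {k : ℕ} (hk : k ≤ 1) (x : ℝ) :
    besselI k (2 * x) = ∑' n, x ^ (2 * n + k) / (n ! * (n + k)!) := by
  rw [besselI_eq_integral_cos_pow hk, ← (hasSum_integral_exp_mul_cos_mul_cos_pow _ _ _ k).tsum_eq,
    tsum_eq_tsum_two_mul_add_of_odd hk, ← tsum_mul_left]
  · congr 1
    ext n
    interval_cases k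
    · simp only [add_zero]
      rw [integral_cos_pow_even, mul_pow, pow_mul, pow_mul]
      field_simp
      norm_num [mul_comm]
    · rw [show 2 * n + 1 + 1 = 2 * n + 2 by ring, integral_cos_pow_add_two, integral_cos_pow_even,
        mul_pow, pow_succ, pow_mul, factorial_succ, factorial_succ]
      push_cast
      field_simp
      norm_num
      ring
  · rintro j ⟨r, hr⟩
    rw [hr, integral_cos_pow_odd, mul_zero]

lemma tsum_ite_fst_eq_snd_add {α : Type*} [AddCommMonoid α] [TopologicalSpace α]
    (f : ℕ × ℕ → α) (k : ℕ) :
    ∑' p : ℕ × ℕ, (if p.1 = p.2 + k then f p else 0) = ∑' n, f (n + k, n) := by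
  have hinj : Function.Injective fun n : ℕ ↦ (n + k, n) := fun m n h ↦ congrArg Prod.snd h
  rw [← hinj.tsum_eq]
  · simp
  · rintro ⟨m, n⟩ hp
    by_cases h : m = n + k
    · exact ⟨n, by rw [h]⟩
    · simp [h] at hp

lemma tsum_add_comp_swap {α β : Type*} [AddCommMonoid α] [TopologicalSpace α]
    [ContinuousAdd α] [T2Space α] {f : β × β → α} (hf : Summable f) :
    ∑' p, (f p + f p.swap) = 2 • ∑' p, f p := by
  have hswap : ∑' p : β × β, f p.swap = ∑' p, f p := (Equiv.prodComm β β).tsum_eq f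
  have hf_swap : Summable fun p : β × β ↦ f p.swap := (Equiv.prodComm β β).summable_iff.2 hf
  rw [hf.tsum_add hf_swap, hswap, two_nsmul]

noncomputable def poissonTerm (lam : ℝ) (n : ℕ) : ℝ := exp (-lam) * lam ^ n / n !

section Poisson

variable (lam : ℝ)

lemma natCast_add_one_mul_poissonTerm_succ (n : ℕ) :
    ((n : ℝ) + 1) * poissonTerm lam (n + 1) = lam * poissonTerm lam n := by
  simp only [poissonTerm, factorial_succ, cast_mul, cast_succ, pow_succ]
  field_simp

lemma poissonTerm_add_mul_poissonTerm (n k : ℕ) :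
    poissonTerm lam (n + k) * poissonTerm lam n =
      exp (-2 * lam) * (lam ^ (2 * n + k) / (n ! * (n + k)!)) := by
  rw [poissonTerm, poissonTerm, show -2 * lam = -lam + -lam by ring, exp_add]
  field_simp
  ring

lemma summable_natCast_add_one_mul_abs_poissonTerm :
    Summable fun n : ℕ ↦ ((n : ℝ) + 1) * |poissonTerm lam n| := by
  have habs : Summable fun n ↦ |poissonTerm lam n| := by
    refine ((summable_pow_div_factorial |lam|).mul_left (exp (-lam))).congr fun n ↦ ?_
    simp [poissonTerm, abs_div, abs_mul, abs_of_pos (exp_pos _), mul_div_assoc]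
  have hshift : Summable fun n : ℕ ↦ ((n + 1 : ℕ) : ℝ) * |poissonTerm lam (n + 1)| := by
    refine (habs.mul_left |lam|).congr fun n ↦ ?_
    rw [← abs_mul, ← natCast_add_one_mul_poissonTerm_succ, abs_mul,
      abs_of_nonneg (by positivity : (0 : ℝ) ≤ n + 1), cast_succ]
  have hmul : Summable fun n : ℕ ↦ (n : ℝ) * |poissonTerm lam n| :=
    (summable_nat_add_iff (f := fun n : ℕ ↦ (n : ℝ) * |poissonTerm lam n|) 1).1 hshift
  exact (hmul.add habs).congr fun n ↦ by ring

noncomputable def poissonProdTerm (p : ℕ × ℕ) : ℝ :=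
  poissonTerm lam p.1 * poissonTerm lam p.2

lemma poissonProdTerm_swap (p : ℕ × ℕ) : poissonProdTerm lam p.swap = poissonProdTerm lam p :=
  mul_comm _ _

lemma summable_poissonProdTerm_mul {ψ : ℕ × ℕ → ℝ}
    (hψ : ∀ p, |ψ p| ≤ ((p.1 : ℝ) + 1) * (p.2 + 1)) :
    Summable fun p ↦ poissonProdTerm lam p * ψ p := by
  have h := summable_natCast_add_one_mul_abs_poissonTerm lam
  refine .of_norm_bounded (h.mul_of_nonneg h (fun _ ↦ by positivity) fun _ ↦ by positivity)
    fun p ↦ ?_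
  rw [poissonProdTerm, norm_mul, norm_mul, Real.norm_eq_abs, Real.norm_eq_abs, Real.norm_eq_abs]
  calc |poissonTerm lam p.1| * |poissonTerm lam p.2| * |ψ p|
      ≤ |poissonTerm lam p.1| * |poissonTerm lam p.2| * (((p.1 : ℝ) + 1) * (p.2 + 1)) := by
        gcongr; exact hψ p
    _ = _ := by ring

lemma summable_poissonProdTerm_mul_of_abs_le_one {ψ : ℕ × ℕ → ℝ}
    (hψ : ∀ p, |ψ p| ≤ 1) :
    Summable fun p ↦ poissonProdTerm lam p * ψ p :=
  summable_poissonProdTerm_mul lam fun p ↦ (hψ p).trans <| by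
    nlinarith [(p.1.cast_nonneg : (0 : ℝ) ≤ p.1), (p.2.cast_nonneg : (0 : ℝ) ≤ p.2)]

lemma tsum_poissonProdTerm_mul_natCast_fst_mul (ψ : ℕ × ℕ → ℝ) :
    ∑' p, poissonProdTerm lam p * (p.1 * ψ p) =
      lam * ∑' p, poissonProdTerm lam p * ψ (p.1 + 1, p.2) := by
  have hinj : Function.Injective fun p : ℕ × ℕ ↦ (p.1 + 1, p.2) :=
    fun p q h ↦ by simpa [Prod.ext_iff] using h
  rw [← tsum_mul_left, ← hinj.tsum_eq]
  · refine tsum_congr fun p ↦ ?_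
    simp only [poissonProdTerm]
    push_cast
    linear_combination (poissonTerm lam p.2 * ψ (p.1 + 1, p.2)) *
      natCast_add_one_mul_poissonTerm_succ lam p.1
  · rintro ⟨_ | m, n⟩ hp
    · simp at hp
    · exact ⟨(m, n), rfl⟩

lemma tsum_poissonProdTerm_mul_natCast_snd_mul (ψ : ℕ × ℕ → ℝ) :
    ∑' p, poissonProdTerm lam p * (p.2 * ψ p) =
      lam * ∑' p, poissonProdTerm lam p * ψ (p.1, p.2 + 1) := by
  have hswap (g : ℕ × ℕ → ℝ) : ∑' p : ℕ × ℕ, g p.swap = ∑' p, g p :=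
    (Equiv.prodComm ℕ ℕ).tsum_eq g
  rw [← hswap, ← hswap fun p ↦ poissonProdTerm lam p * ψ (p.1, p.2 + 1)]
  simp only [poissonProdTerm_swap, Prod.fst_swap, Prod.snd_swap]
  exact tsum_poissonProdTerm_mul_natCast_fst_mul lam (ψ ∘ Prod.swap)

lemma tsum_poissonProdTerm_mul_sub_mul {ψ : ℕ × ℕ → ℝ} (hψ : ∀ p, |ψ p| ≤ 1) :
    ∑' p, poissonProdTerm lam p * ((p.1 - p.2) * ψ p) =
      lam * ∑' p, poissonProdTerm lam p * (ψ (p.1 + 1, p.2) - ψ (p.1, p.2 + 1)) := by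
  have hfst := summable_poissonProdTerm_mul lam (ψ := fun p ↦ p.1 * ψ p) fun p ↦ by
    rw [abs_mul, Nat.abs_cast]; nlinarith [hψ p, abs_nonneg (ψ p)]
  have hsnd := summable_poissonProdTerm_mul lam (ψ := fun p ↦ p.2 * ψ p) fun p ↦ by
    rw [abs_mul, Nat.abs_cast]; nlinarith [hψ p, abs_nonneg (ψ p)]
  have hfst' := summable_poissonProdTerm_mul_of_abs_le_one lam fun p ↦ hψ (p.1 + 1, p.2)
  have hsnd' := summable_poissonProdTerm_mul_of_abs_le_one lam fun p ↦ hψ (p.1, p.2 + 1)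
  simp only [sub_mul, mul_sub]
  rw [hfst.tsum_sub hsnd, hfst'.tsum_sub hsnd', mul_sub, tsum_poissonProdTerm_mul_natCast_fst_mul,
    tsum_poissonProdTerm_mul_natCast_snd_mul]

lemma tsum_poissonProdTerm_mul_abs_sub :
    ∑' p, poissonProdTerm lam p * |(p.1 : ℝ) - p.2| =
      2 * lam * (∑' n, poissonTerm lam n * poissonTerm lam n +
        ∑' n, poissonTerm lam (n + 1) * poissonTerm lam n) := by
  let ind : ℕ × ℕ → ℝ := fun p ↦ if p.2 < p.1 then 1 else 0
  let diag (k : ℕ) : ℕ × ℕ → ℝ := fun p ↦ if p.1 = p.2 + k then 1 else 0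
  have hind : ∀ p, |ind p| ≤ 1 := fun p ↦ by simp only [ind]; split_ifs <;> simp
  have hdiag : ∀ k p, |diag k p| ≤ 1 := fun k p ↦ by simp only [diag]; split_ifs <;> simp
  have hpos := summable_poissonProdTerm_mul lam (ψ := fun p ↦ (p.1 - p.2) * ind p) fun p ↦ by
    have hsub : |(p.1 : ℝ) - p.2| ≤ p.1 + p.2 := by simpa using abs_sub (p.1 : ℝ) p.2
    rw [abs_mul]
    nlinarith [hind p, abs_nonneg (ind p), (p.1.cast_nonneg : (0 : ℝ) ≤ p.1),
      (p.2.cast_nonneg : (0 : ℝ) ≤ p.2)]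
  have habs : ∀ p : ℕ × ℕ, poissonProdTerm lam p * |(p.1 : ℝ) - p.2| =
      poissonProdTerm lam p * ((p.1 - p.2) * ind p) +
        poissonProdTerm lam p.swap * ((p.2 - p.1) * ind p.swap) := fun p ↦ by
    simp only [poissonProdTerm_swap, ind, Prod.fst_swap, Prod.snd_swap]
    split_ifs with hgt hlt hlt
    · omega
    · rw [abs_of_pos (sub_pos.2 (by exact_mod_cast hgt))]; ring
    · rw [abs_of_neg (sub_neg.2 (by exact_mod_cast hlt))]; ring
    · rw [show p.1 = p.2 by omega]; simp
  have hshift : ∀ p : ℕ × ℕ, ind (p.1 + 1, p.2) - ind (p.1, p.2 + 1) = diag 0 p + diag 1 p :=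
    fun p ↦ by simp only [ind, diag]; split_ifs <;> first | omega | norm_num
  calc ∑' p, poissonProdTerm lam p * |(p.1 : ℝ) - p.2|
      = 2 • ∑' p, poissonProdTerm lam p * ((p.1 - p.2) * ind p) := by
        rw [← tsum_add_comp_swap hpos]
        exact tsum_congr habs
    _ = 2 * lam *
          ∑' p, (poissonProdTerm lam p * diag 0 p + poissonProdTerm lam p * diag 1 p) := by
        simp only [tsum_poissonProdTerm_mul_sub_mul lam hind, hshift, mul_add, two_nsmul]
        ring
    _ = _ := by
        rw [(summable_poissonProdTerm_mul_of_abs_le_one lam (hdiag 0)).tsum_add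
          (summable_poissonProdTerm_mul_of_abs_le_one lam (hdiag 1))]
        simp only [diag, mul_ite, mul_one, mul_zero]
        rw [tsum_ite_fst_eq_snd_add, tsum_ite_fst_eq_snd_add]
        rfl

lemma tsum_poissonTerm_add_mul_poissonTerm {k : ℕ} (hk : k ≤ 1) :
    ∑' n, poissonTerm lam (n + k) * poissonTerm lam n = exp (-2 * lam) * besselI k (2 * lam) := by
  simp_rw [poissonTerm_add_mul_poissonTerm, tsum_mul_left, besselI_two_mul_eq_tsum hk]

end Poisson

theorem skellam_mean_abs_general (lam : ℝ) :
    ∑' p : ℕ × ℕ,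
        (Real.exp (-lam) * lam ^ p.1 / (p.1.factorial : ℝ)) *
          (Real.exp (-lam) * lam ^ p.2 / (p.2.factorial : ℝ)) *
            |(p.1 : ℝ) - (p.2 : ℝ)|
      = 2 * lam * Real.exp (-2 * lam) * (besselI 0 (2 * lam) + besselI 1 (2 * lam)) := by
  have h0 := tsum_poissonTerm_add_mul_poissonTerm lam zero_le_one
  have h1 := tsum_poissonTerm_add_mul_poissonTerm lam le_rfl
  simp only [add_zero] at h0
  refine (tsum_poissonProdTerm_mul_abs_sub lam).trans ?_
  rw [h0, h1]
  ring

/-- The mean absolute value of a symmetric Skellam random variable: if `X, Z` are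
independent `Poisson(λ)`, then `E[|X - Z|] = 2 λ e^{-2λ} (I₀(2λ) + I₁(2λ))`.
The expectation is written as the sum over the joint (product) distribution. -/
theorem skellam_mean_abs (lam : ℝ) (hlam : 0 < lam) :
    ∑' p : ℕ × ℕ,
        (Real.exp (-lam) * lam ^ p.1 / (p.1.factorial : ℝ)) *
          (Real.exp (-lam) * lam ^ p.2 / (p.2.factorial : ℝ)) *
            |(p.1 : ℝ) - (p.2 : ℝ)|
      = 2 * lam * Real.exp (-2 * lam) * (besselI 0 (2 * lam) + besselI 1 (2 * lam)) :=
  skellam_mean_abs_general lam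
end

section
/- Poisson upper tail at sublogarithmic threshold: Fix reals λ > 0 and ε > 0, and let X be a Poisson(λ) random variable. Then N · P[X ≥ (1+ε)·(ln N)/(ln ln N)] → 0 as N → ∞ (N ranging over integers ≥ 3). -/
/-! If `k = ⌈t⌉₊`, then `k! j! ≤ (k + j)!` gives `P[X ≥ t] ≤ λ^k / k!`, and `k^k ≤ e^k k!` turns
this into `P[X ≥ t] ≤ exp (-t (log t - log λ - 1))`. At `t = (1 + ε) L / log L` with `L = log N`
the exponent is `-(1 + ε + o(1)) L`, so `N · P[X ≥ t] ≤ N^(-ε/2)` eventually. -/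

open Filter Topology Real

theorem tsum_poisson_tail_le_pow_div_factorial {lam : ℝ} (hlam : 0 ≤ lam) (t : ℝ) :
    ∑' n : ℕ, (if t ≤ (n : ℝ) then exp (-lam) * lam ^ n / (n.factorial : ℝ) else 0) ≤
      lam ^ ⌈t⌉₊ / (⌈t⌉₊.factorial : ℝ) := by
  set k := ⌈t⌉₊
  set tail : ℕ → ℝ := fun n => if t ≤ (n : ℝ) then exp (-lam) * lam ^ n / (n.factorial : ℝ) else 0
  have hsupp : Function.support tail ⊆ Set.range (· + k) := by
    intro n hn
    have htn : t ≤ (n : ℝ) := by by_contra h; exact hn (if_neg h)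
    exact ⟨n - k, Nat.sub_add_cancel (Nat.ceil_le.mpr htn)⟩
  have hterm : ∀ j : ℕ, tail (j + k) ≤
      exp (-lam) * (lam ^ k / k.factorial) * (lam ^ j / j.factorial) := by
    intro j
    have hfac : (k.factorial : ℝ) * j.factorial ≤ (j + k).factorial := by
      rw [add_comm]
      exact_mod_cast Nat.le_of_dvd (Nat.factorial_pos _)
        (Nat.factorial_mul_factorial_dvd_factorial_add k j)
    rw [show tail (j + k) = exp (-lam) * lam ^ (j + k) / ((j + k).factorial : ℝ) from
      if_pos (Nat.ceil_le.mp (Nat.le_add_left k j))]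
    rw [mul_assoc, mul_div_assoc, div_mul_div_comm, pow_add, mul_comm (lam ^ j)]
    gcongr
  have hexp := (NormedSpace.expSeries_div_hasSum_exp lam).mul_left
    (exp (-lam) * (lam ^ k / k.factorial))
  have htail_nonneg : ∀ j, 0 ≤ tail (j + k) := fun j => by
    dsimp only [tail]; split_ifs <;> positivity
  calc ∑' n, tail n = ∑' j, tail (j + k) := ((add_left_injective k).tsum_eq hsupp).symm
    _ ≤ ∑' j : ℕ, exp (-lam) * (lam ^ k / k.factorial) * (lam ^ j / j.factorial) :=
        Summable.tsum_le_tsum hterm (hexp.summable.of_nonneg_of_le htail_nonneg hterm) hexp.summable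
    _ = lam ^ k / k.factorial := by
        rw [hexp.tsum_eq, ← exp_eq_exp_ℝ, mul_comm (exp (-lam)), mul_assoc, ← exp_add]
        simp

theorem pow_div_factorial_le_exp_neg {lam : ℝ} (hlam : 0 < lam) (k : ℕ) :
    lam ^ k / (k.factorial : ℝ) ≤ exp (-(k * (log k - (log lam + 1)))) := by
  rcases k.eq_zero_or_pos with rfl | hk
  · simp
  have hk' : (0 : ℝ) < k := Nat.cast_pos.mpr hk
  have hkk : (k : ℝ) ^ k ≤ exp k * k.factorial := by
    rw [← div_le_iff₀ (by positivity)]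
    exact pow_div_factorial_le_exp _ hk'.le k
  calc lam ^ k / (k.factorial : ℝ) ≤ lam ^ k * exp k / k ^ k := by
        rw [div_le_div_iff₀ (by positivity) (by positivity), mul_assoc]
        gcongr
    _ = exp (-(k * (log k - (log lam + 1)))) := by
        rw [show -(k * (log k - (log lam + 1))) = k * (log lam + 1 - log k) by ring, exp_nat_mul,
          exp_sub, exp_add, exp_log hlam, exp_log hk', div_pow, mul_pow, ← exp_nat_mul, mul_one]

theorem mul_log_sub_le_mul_log_sub {c s t : ℝ} (ht : 0 < t) (hts : t ≤ s) (hct : c ≤ log t) :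
    t * (log t - c) ≤ s * (log s - c) := by
  have hct' : 0 ≤ log t - c := sub_nonneg.mpr hct
  have hs : 0 ≤ s := ht.le.trans hts
  gcongr

theorem tsum_poisson_tail_le_exp_neg {lam t : ℝ} (hlam : 0 < lam) (ht : 0 < t)
    (hct : log lam + 1 ≤ log t) :
    ∑' n : ℕ, (if t ≤ (n : ℝ) then exp (-lam) * lam ^ n / (n.factorial : ℝ) else 0) ≤
      exp (-(t * (log t - (log lam + 1)))) :=
  calc _ ≤ lam ^ ⌈t⌉₊ / (⌈t⌉₊.factorial : ℝ) := tsum_poisson_tail_le_pow_div_factorial hlam.le t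
    _ ≤ exp (-(⌈t⌉₊ * (log ⌈t⌉₊ - (log lam + 1)))) := pow_div_factorial_le_exp_neg hlam _
    _ ≤ exp (-(t * (log t - (log lam + 1)))) :=
        exp_le_exp.mpr (neg_le_neg (mul_log_sub_le_mul_log_sub ht (Nat.le_ceil t) hct))

theorem tendsto_mul_log_sub_div_of_div_log (a c : ℝ) :
    Tendsto (fun L : ℝ => a * L / log L * (log (a * L / log L) - c) / L) atTop (𝓝 a) := by
  rcases eq_or_ne a 0 with rfl | ha
  · simp
  have hlog_div : Tendsto (fun A : ℝ => log A / A) atTop (𝓝 0) :=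
    isLittleO_log_id_atTop.tendsto_div_nhds_zero
  have hlim : Tendsto (fun A : ℝ => a * (1 + ((log a - c) * A⁻¹ - log A / A))) atTop (𝓝 a) := by
    simpa using ((tendsto_inv_atTop_zero.const_mul (log a - c)).sub hlog_div).const_add 1
      |>.const_mul a
  refine (hlim.comp tendsto_log_atTop).congr' ?_
  filter_upwards [eventually_gt_atTop 1] with L hL
  have hL0 : L ≠ 0 := by positivity
  have hA : log L ≠ 0 := (log_pos hL).ne'
  simp only [Function.comp_apply]
  rw [log_div (mul_ne_zero ha hL0) hA, log_mul ha hL0]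
  field_simp
  ring

/-- Poisson upper tail at sublogarithmic threshold: for a `Poisson(λ)` random variable `X`,
`N · P[X ≥ (1+ε) ln N / ln ln N] → 0` as `N → ∞`. The tail probability is written as
the sum of the Poisson point probabilities `e^{-λ} λ^n / n!` over the tail. -/
theorem poisson_tail_sublog (lam ε : ℝ) (hlam : 0 < lam) (hε : 0 < ε) :
    Filter.Tendsto
      (fun N : ℕ =>
        (N : ℝ) *
          ∑' n : ℕ,
            if (1 + ε) * Real.log N / Real.log (Real.log N) ≤ (n : ℝ) then
              Real.exp (-lam) * lam ^ n / (n.factorial : ℝ)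
            else 0)
      Filter.atTop (nhds 0) := by
  set c := log lam + 1
  have hlogN : Tendsto (fun N : ℕ => log N) atTop atTop :=
    tendsto_log_atTop.comp tendsto_natCast_atTop_atTop
  have hentropy : ∀ᶠ L in atTop, 1 < L ∧
      (1 + ε / 2) * L < (1 + ε) * L / log L * (log ((1 + ε) * L / log L) - c) := by
    filter_upwards [(tendsto_mul_log_sub_div_of_div_log (1 + ε) c).eventually
      (lt_mem_nhds (by linarith : 1 + ε / 2 < 1 + ε)), eventually_gt_atTop 1] with L h hL
    exact ⟨hL, (lt_div_iff₀ (by linarith)).mp h⟩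
  have hbound : ∀ᶠ N : ℕ in atTop, (N : ℝ) * ∑' n : ℕ,
      (if (1 + ε) * log N / log (log N) ≤ (n : ℝ) then exp (-lam) * lam ^ n / (n.factorial : ℝ)
        else 0) ≤ exp (-(ε / 2) * log N) := by
    filter_upwards [hlogN.eventually hentropy, eventually_gt_atTop 0] with N ⟨hL, hent⟩ hN
    set t := (1 + ε) * log N / log (log N)
    have ht : 0 < t := div_pos (by positivity) (log_pos hL)
    have hct : c ≤ log t := by nlinarith
    calc _ ≤ exp (log N) * exp (-(t * (log t - c))) := by
          rw [exp_log (by exact_mod_cast hN)]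
          exact mul_le_mul_of_nonneg_left (tsum_poisson_tail_le_exp_neg hlam ht hct) (by positivity)
      _ ≤ exp (log N) * exp (-((1 + ε / 2) * log N)) := by gcongr
      _ = exp (-(ε / 2) * log N) := by rw [← exp_add]; ring_nf
  refine squeeze_zero' (Eventually.of_forall fun N => mul_nonneg N.cast_nonneg
    (tsum_nonneg fun n => by split_ifs <;> positivity)) hbound ?_
  exact tendsto_exp_atBot.comp (hlogN.const_mul_atTop_of_neg (by linarith))
end

section
/- Mean and variance of the normalized support size on the simplex: Let q ≥ 2 and N ≥ 1 be integers, let X be uniformly distributed on the discrete simplex S_{q,N}, and set S = |supp(X)|/q. Then E[S] = N/(N+q−1) and Var(S) = N(N−1)(q−1) / (q·(N+q−1)²·(N+q−2)). -/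
/-!
Shifting by the indicator of `s` maps `S_{q,M}` bijectively onto the points of `S_{q,M+|s|}` that
are positive on `s`. Double counting `∑ₓ ∑ᵢ xᵢ` gives `(M+1) |S_{q,M+1}| = (M+q) |S_{q,M}|`, and
iterating yields, for `|s| = k`, `#{x ∈ S_{q,M} : s ⊆ supp x} = M^{(k)} / (M+q-1)^{(k)} · |S_{q,M}|`
(falling factorials; both sides vanish when `M < k`). Summing over the `k`-subsets `s` computes
the binomial moments `E[C(|supp X|, k)] = C(q,k) M^{(k)} / (M+q-1)^{(k)}`, and the mean and
variance of `|supp X| / q` follow from `k = 1, 2`.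
-/

open scoped BigOperators

/-- The number of nonzero coordinates (support size) of a vector. -/
def suppCard {q : ℕ} (x : Fin q → ℕ) : ℕ := (Finset.univ.filter fun i => x i ≠ 0).card

open Finset

namespace simplex

variable {q : ℕ}

lemma mem_iff {N : ℕ} {x : Fin q → ℕ} : x ∈ simplex q N ↔ ∑ i, x i = N :=
  Finset.Nat.mem_antidiagonalTuple

lemma nonempty (hq : q ≠ 0) (N : ℕ) : (simplex q N).Nonempty :=
  ⟨Pi.single ⟨0, Nat.pos_of_ne_zero hq⟩ N, by simp [mem_iff]⟩

lemma filter_forall_ne_zero_eq_map (s : Finset (Fin q)) (M : ℕ) :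
    {x ∈ simplex q (M + #s) | ∀ i ∈ s, x i ≠ 0} =
      (simplex q M).map (addRightEmbedding fun i => if i ∈ s then 1 else 0) := by
  set e : Fin q → ℕ := fun i => if i ∈ s then 1 else 0 with he
  have sum_e : ∑ i, e i = #s := by simp [he]
  ext x
  simp only [mem_filter, mem_map, mem_iff, addRightEmbedding_apply]
  constructor
  · rintro ⟨hx, hpos⟩
    have cancel : x - e + e = x := by
      funext i
      by_cases hi : i ∈ s
      · have := hpos i hi
        simp only [Pi.add_apply, Pi.sub_apply, he, if_pos hi]
        omega
      · simp [he, hi]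
    refine ⟨x - e, ?_, cancel⟩
    have := congrArg (fun y => ∑ i, y i) cancel
    simp only [Pi.add_apply, sum_add_distrib, sum_e, hx] at this
    omega
  · rintro ⟨y, hy, rfl⟩
    exact ⟨by simp [sum_add_distrib, hy, sum_e], fun i hi => by simp [he, hi]⟩

lemma succ_mul_card_succ (M : ℕ) :
    (M + 1) * #(simplex q (M + 1)) = (M + q) * #(simplex q M) := by
  have sum_coord (i : Fin q) :
      ∑ x ∈ simplex q (M + 1), x i = ∑ y ∈ simplex q M, (y i + 1) := by
    have h := filter_forall_ne_zero_eq_map {i} M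
    simp only [card_singleton, mem_singleton, forall_eq] at h
    rw [← sum_filter_ne_zero, h, sum_map]
    simp
  calc (M + 1) * #(simplex q (M + 1))
      = ∑ x ∈ simplex q (M + 1), ∑ i, x i := by
        rw [sum_congr rfl fun x hx => mem_iff.mp hx, sum_const, smul_eq_mul, mul_comm]
    _ = ∑ y ∈ simplex q M, ∑ i, (y i + 1) := by
        rw [sum_comm, sum_congr rfl fun i _ => sum_coord i, sum_comm]
    _ = (M + q) * #(simplex q M) := by
        rw [sum_congr rfl fun y hy => by rw [sum_add_distrib, mem_iff.mp hy]]
        simp [mul_comm]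

lemma ascFactorial_mul_card (m k : ℕ) :
    (m + q).ascFactorial k * #(simplex q m) = (m + 1).ascFactorial k * #(simplex q (m + k)) := by
  induction k with
  | zero => simp
  | succ k ih =>
    have step := succ_mul_card_succ (q := q) (m + k)
    rw [Nat.ascFactorial_succ, Nat.ascFactorial_succ, mul_assoc, ih, ← add_assoc]
    calc (m + q + k) * ((m + 1).ascFactorial k * #(simplex q (m + k)))
        = (m + 1).ascFactorial k * ((m + k + q) * #(simplex q (m + k))) := by ring
      _ = (m + 1 + k) * (m + 1).ascFactorial k * #(simplex q (m + k + 1)) := by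
        rw [← step]; ring

lemma descFactorial_mul_card_filter_forall_ne_zero (hq : q ≠ 0) (s : Finset (Fin q)) (M : ℕ) :
    (M + q - 1).descFactorial #s * #{x ∈ simplex q M | ∀ i ∈ s, x i ≠ 0} =
      M.descFactorial #s * #(simplex q M) := by
  rcases lt_or_ge M #s with hlt | hle
  · have empty : {x ∈ simplex q M | ∀ i ∈ s, x i ≠ 0} = ∅ := by
      refine filter_eq_empty_iff.mpr fun x hx hpos => hlt.not_ge ?_
      calc #s ≤ ∑ i ∈ s, x i := by
            simpa using card_nsmul_le_sum s x 1 fun i hi => Nat.one_le_iff_ne_zero.mpr (hpos i hi)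
        _ ≤ ∑ i, x i := sum_le_sum_of_subset (subset_univ s)
        _ = M := mem_iff.mp hx
    simp [empty, Nat.descFactorial_of_lt hlt]
  · obtain ⟨m, rfl⟩ := Nat.exists_eq_add_of_le' hle
    obtain ⟨r, rfl⟩ := Nat.exists_eq_succ_of_ne_zero hq
    rw [filter_forall_ne_zero_eq_map, card_map, show m + #s + (r + 1) - 1 = m + r + #s by omega,
      Nat.add_descFactorial_eq_ascFactorial, Nat.add_descFactorial_eq_ascFactorial, add_assoc]
    exact ascFactorial_mul_card m #s

lemma descFactorial_mul_sum_choose_suppCard (hq : q ≠ 0) (M k : ℕ) :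
    (M + q - 1).descFactorial k * ∑ x ∈ simplex q M, (suppCard x).choose k =
      q.choose k * M.descFactorial k * #(simplex q M) := by
  have choose_eq (x : Fin q → ℕ) : (suppCard x).choose k =
      ∑ s ∈ powersetCard k univ, if ∀ i ∈ s, x i ≠ 0 then 1 else 0 := by
    rw [suppCard, ← card_powersetCard, sum_boole]
    congr 1
    ext s
    simp [mem_powersetCard, subset_iff, and_comm]
  calc (M + q - 1).descFactorial k * ∑ x ∈ simplex q M, (suppCard x).choose k
      = ∑ s ∈ powersetCard k univ,
          (M + q - 1).descFactorial k * #{x ∈ simplex q M | ∀ i ∈ s, x i ≠ 0} := by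
        rw [sum_congr rfl fun x _ => choose_eq x, sum_comm, mul_sum]
        simp only [sum_boole, Nat.cast_id]
    _ = ∑ s ∈ powersetCard k univ, M.descFactorial k * #(simplex q M) :=
        sum_congr rfl fun s hs => by
          rw [← (mem_powersetCard.mp hs).2]
          exact descFactorial_mul_card_filter_forall_ne_zero hq s M
    _ = q.choose k * M.descFactorial k * #(simplex q M) := by
        simp [card_powersetCard, mul_assoc]

lemma sum_suppCard (hq : q ≠ 0) {N : ℕ} (hN : N ≠ 0) :
    ∑ x ∈ simplex q N, (suppCard x : ℝ) = q * N / (N + q - 1) * #(simplex q N) := by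
  have h := congrArg (Nat.cast (R := ℝ)) (descFactorial_mul_sum_choose_suppCard hq N 1)
  push_cast [Nat.descFactorial_one, Nat.choose_one_right,
    Nat.cast_sub (show 1 ≤ N + q by omega)] at h
  have hpos : (N : ℝ) + q - 1 ≠ 0 := by
    have : (1 : ℝ) ≤ q := by exact_mod_cast Nat.one_le_iff_ne_zero.mpr hq
    have : (1 : ℝ) ≤ N := by exact_mod_cast Nat.one_le_iff_ne_zero.mpr hN
    linarith
  rw [div_mul_eq_mul_div, eq_div_iff hpos, ← h]
  ring

lemma sum_suppCard_mul_sub_one (hq : 2 ≤ q) {N : ℕ} (hN : N ≠ 0) :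
    ∑ x ∈ simplex q N, (suppCard x : ℝ) * (suppCard x - 1) =
      q * (q - 1) * (N * (N - 1)) / ((N + q - 1) * (N + q - 2)) * #(simplex q N) := by
  have h := congrArg (Nat.cast (R := ℝ))
    (descFactorial_mul_sum_choose_suppCard (by omega : q ≠ 0) N 2)
  push_cast [Nat.cast_descFactorial_two, Nat.cast_choose_two,
    Nat.cast_sub (show 1 ≤ N + q by omega)] at h
  have hpos : ((N : ℝ) + q - 1) * (N + q - 2) ≠ 0 := by
    have : (2 : ℝ) ≤ q := by exact_mod_cast hq
    have : (1 : ℝ) ≤ N := by exact_mod_cast Nat.one_le_iff_ne_zero.mpr hN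
    apply mul_ne_zero <;> linarith
  rw [← sum_div] at h
  rw [div_mul_eq_mul_div, eq_div_iff hpos]
  linear_combination 2 * h

end simplex

/-- Mean and variance of the normalized support size `S = |supp(X)|/q` of a uniformly
distributed point `X` of the simplex `S_{q,N}`:
`E[S] = N/(N+q-1)` and `Var(S) = N(N-1)(q-1)/(q (N+q-1)² (N+q-2))`. -/
theorem simplex_support_mean_var (q N : ℕ) (hq : 2 ≤ q) (hN : 1 ≤ N) :
    (∑ x ∈ simplex q N, (suppCard x : ℝ) / (q : ℝ)) / ((simplex q N).card : ℝ)
        = (N : ℝ) / ((N : ℝ) + (q : ℝ) - 1) ∧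
      (∑ x ∈ simplex q N,
          ((suppCard x : ℝ) / (q : ℝ) - (N : ℝ) / ((N : ℝ) + (q : ℝ) - 1)) ^ 2) /
          ((simplex q N).card : ℝ)
        = (N : ℝ) * ((N : ℝ) - 1) * ((q : ℝ) - 1) /
            ((q : ℝ) * ((N : ℝ) + (q : ℝ) - 1) ^ 2 * ((N : ℝ) + (q : ℝ) - 2)) := by
  have hq₀ : q ≠ 0 := by omega
  have hN₀ : N ≠ 0 := by omega
  have hqR : (2 : ℝ) ≤ q := by exact_mod_cast hq
  have hNR : (1 : ℝ) ≤ N := by exact_mod_cast hN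
  have hT : (#(simplex q N) : ℝ) ≠ 0 := by
    exact_mod_cast (simplex.nonempty hq₀ N).card_pos.ne'
  have h₁ : (N : ℝ) + q - 1 ≠ 0 := by linarith
  have h₂ : (N : ℝ) + q - 2 ≠ 0 := by linarith
  -- Writing `S² = S (S - 1) + S` reduces the second moment to the binomial moments of order 1, 2.
  have expand (S μ : ℝ) :
      (S / q - μ) ^ 2 = S * (S - 1) / q ^ 2 + (1 / q ^ 2 - 2 * μ / q) * S + μ ^ 2 := by
    ring
  constructor
  · rw [← sum_div, simplex.sum_suppCard hq₀ hN₀]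
    field_simp
  · rw [sum_congr rfl fun x _ => expand _ _, sum_add_distrib, sum_add_distrib, ← sum_div, ← mul_sum,
      sum_const, nsmul_eq_mul, simplex.sum_suppCard hq₀ hN₀,
      simplex.sum_suppCard_mul_sub_one hq hN₀]
    field_simp
    ring
end

section
/- Concentration of the support size on the simplex: Let q ≥ 2 and N ≥ 1 be integers, let X be uniformly distributed on the discrete simplex S_{q,N}, and set S = |supp(X)|/q. Then for every real ε > 0, P[|S − N/(N+q−1)| > ε] ≤ N(N−1)(q−1) / (ε²·q·(N+q−1)²·(N+q−2)). -/
open scoped BigOperators Classical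

lemma mem_simplex' {q N : ℕ} {x : Fin q → ℕ} : x ∈ simplex q N ↔ ∑ i, x i = N :=
  Finset.Nat.mem_antidiagonalTuple

lemma sum_choose_aux' (q N : ℕ) :
    ∑ j ∈ Finset.range (N+1), (j + q - 1).choose j = (N + q).choose N := by
  induction N with
  | zero => simp
  | succ n ih =>
    rw [Finset.sum_range_succ, ih, show n + 1 + q - 1 = n + q by omega,
      show n + 1 + q = (n + q) + 1 by omega, Nat.choose_succ_succ]

lemma list_sum_range' {M : Type*} [AddCommMonoid M] (n : ℕ) (g : ℕ → M) :
    ((List.range n).map g).sum = ∑ i ∈ Finset.range n, g i := rfl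

lemma length_antidiagonalTuple' (q N : ℕ) :
    (List.Nat.antidiagonalTuple q N).length = (N + q - 1).choose N := by
  induction q generalizing N with
  | zero =>
    cases N with
    | zero => rfl
    | succ n => simp [Nat.choose_eq_zero_of_lt]
  | succ k ih =>
    rw [List.Nat.antidiagonalTuple, List.length_flatMap, List.Nat.antidiagonal,
      List.map_map]
    rw [list_sum_range']
    simp only [Function.comp, List.length_map, ih]
    have h : ∀ x ∈ Finset.range (N+1), (N - x + k - 1).choose (N - x)
        = (N + 1 - 1 - x + k - 1).choose (N + 1 - 1 - x) := by
      intro x hx; norm_num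
    rw [Finset.sum_congr rfl h,
      Finset.sum_range_reflect (fun j => (j + k - 1).choose j) (N+1), sum_choose_aux']
    congr 1

lemma card_simplex' (q N : ℕ) : (simplex q N).card = (N + q - 1).choose N := by
  rw [← length_antidiagonalTuple']
  rfl

lemma filter_card_one' (q N : ℕ) (i : Fin q) :
    ((simplex q (N+1)).filter fun x => x i ≠ 0).card = (simplex q N).card := by
  apply Finset.card_bij' (fun x _ => Function.update x i (x i - 1))
    (fun y _ => Function.update y i (y i + 1))
  · intro x hx
    rw [Finset.mem_filter] at hx
    funext j
    by_cases hj : j = i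
    · subst hj
      simp only [Function.update_self]
      have : x j ≠ 0 := hx.2
      omega
    · simp [Function.update_of_ne hj]
  · intro y hy
    funext j
    by_cases hj : j = i
    · subst hj; simp
    · simp [Function.update_of_ne hj]
  · intro x hx
    rw [Finset.mem_filter, mem_simplex'] at hx
    rw [mem_simplex', Finset.sum_update_of_mem (Finset.mem_univ i), ← Finset.erase_eq]
    have h2 := Finset.add_sum_erase Finset.univ x (Finset.mem_univ i)
    omega
  · intro y hy
    rw [mem_simplex'] at hy
    rw [Finset.mem_filter, mem_simplex',
      Finset.sum_update_of_mem (Finset.mem_univ i), ← Finset.erase_eq]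
    have h2 := Finset.add_sum_erase Finset.univ y (Finset.mem_univ i)
    constructor
    · omega
    · simp

lemma filter_card_pair' (q N : ℕ) (i j : Fin q) (hij : i ≠ j) :
    ((simplex q (N+1)).filter fun x => x i ≠ 0 ∧ x j ≠ 0).card
      = ((simplex q N).filter fun x => x j ≠ 0).card := by
  apply Finset.card_bij' (fun x _ => Function.update x i (x i - 1))
    (fun y _ => Function.update y i (y i + 1))
  · intro x hx
    rw [Finset.mem_filter] at hx
    funext l
    by_cases hl : l = i
    · subst hl
      simp only [Function.update_self]
      have : x l ≠ 0 := hx.2.1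
      omega
    · simp [Function.update_of_ne hl]
  · intro y hy
    funext l
    by_cases hl : l = i
    · subst hl; simp
    · simp [Function.update_of_ne hl]
  · intro x hx
    rw [Finset.mem_filter, mem_simplex'] at hx
    rw [Finset.mem_filter, mem_simplex',
      Finset.sum_update_of_mem (Finset.mem_univ i), ← Finset.erase_eq]
    have h2 := Finset.add_sum_erase Finset.univ x (Finset.mem_univ i)
    refine ⟨by omega, ?_⟩
    rw [Function.update_of_ne (Ne.symm hij)]
    exact hx.2.2
  · intro y hy
    rw [Finset.mem_filter, mem_simplex'] at hy
    rw [Finset.mem_filter, mem_simplex',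
      Finset.sum_update_of_mem (Finset.mem_univ i), ← Finset.erase_eq]
    have h2 := Finset.add_sum_erase Finset.univ y (Finset.mem_univ i)
    refine ⟨by omega, by simp, ?_⟩
    rw [Function.update_of_ne (Ne.symm hij)]
    exact hy.2

lemma choose_ratio' (m k : ℕ) :
    (m+1) * m.choose k = (m+1-k) * (m+1).choose k :=
  calc (m+1) * m.choose k = (m+1).choose (k+1) * (k+1) := by
        simpa using Nat.add_one_mul_choose_eq m k
    _ = (m+1).choose k * (m+1-k) := Nat.choose_succ_right_eq (m+1) k
    _ = (m+1-k) * (m+1).choose k := mul_comm _ _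

section counts

variable (M Q : ℕ)

lemma cardA : (simplex (Q+2) (M+1)).card = (M+Q+2).choose (Q+1) := by
  rw [card_simplex', show M+1+(Q+2)-1 = M+Q+2 by omega,
    ← Nat.choose_symm (show M+1 ≤ M+Q+2 by omega), show M+Q+2-(M+1) = Q+1 by omega]

lemma cardB (i : Fin (Q+2)) :
    ((simplex (Q+2) (M+1)).filter fun x => x i ≠ 0).card = (M+Q+1).choose (Q+1) := by
  rw [filter_card_one', card_simplex', show M+(Q+2)-1 = M+Q+1 by omega,
    ← Nat.choose_symm (show M ≤ M+Q+1 by omega), show M+Q+1-M = Q+1 by omega]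

lemma cardC (i j : Fin (Q+2)) (hij : i ≠ j) :
    ((simplex (Q+2) (M+1)).filter fun x => x i ≠ 0 ∧ x j ≠ 0).card
      = (M+Q).choose (Q+1) := by
  rw [filter_card_pair' _ _ _ _ hij]
  cases M with
  | zero =>
    rw [Nat.choose_eq_zero_of_lt (by omega), Finset.card_eq_zero, Finset.filter_eq_empty_iff]
    intro x hx
    rw [mem_simplex'] at hx
    simp only [ne_eq, not_not]
    by_contra h
    have hle := Finset.single_le_sum (f := x) (fun i _ => Nat.zero_le _) (Finset.mem_univ j)
    omega
  | succ m =>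
    rw [filter_card_one', card_simplex', show m+(Q+2)-1 = m+Q+1 by omega,
      ← Nat.choose_symm (show m ≤ m+Q+1 by omega), show m+Q+1-m = Q+1 by omega,
      show m+1+Q = m+Q+1 by omega]

lemma ratioAB : (M+1) * (M+Q+2).choose (Q+1) = (M+Q+2) * (M+Q+1).choose (Q+1) := by
  have := choose_ratio' (M+Q+1) (Q+1)
  rw [show M+Q+1+1 = M+Q+2 by omega, show M+Q+2-(Q+1) = M+1 by omega] at this
  omega

lemma ratioBC : M * (M+Q+1).choose (Q+1) = (M+Q+1) * (M+Q).choose (Q+1) := by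
  have := choose_ratio' (M+Q) (Q+1)
  rw [show M+Q+1-(Q+1) = M by omega] at this
  omega

lemma sumSupp :
    ∑ x ∈ simplex (Q+2) (M+1), suppCard x = (Q+2) * (M+Q+1).choose (Q+1) := by
  have h : ∀ x : Fin (Q+2) → ℕ, suppCard x = ∑ i, if x i ≠ 0 then 1 else 0 := by
    intro x; rw [suppCard, Finset.card_filter]
  simp only [h]
  rw [Finset.sum_comm]
  have h2 : ∀ i : Fin (Q+2), ∑ x ∈ simplex (Q+2) (M+1), (if x i ≠ 0 then 1 else 0)
      = (M+Q+1).choose (Q+1) := by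
    intro i
    rw [← Finset.card_filter, cardB]
  rw [Finset.sum_congr rfl fun i _ => h2 i, Finset.sum_const, Finset.card_univ,
    Fintype.card_fin, smul_eq_mul]

lemma sumSuppSq :
    ∑ x ∈ simplex (Q+2) (M+1), suppCard x * suppCard x
      = (Q+2) * ((M+Q+1).choose (Q+1) + (Q+1) * (M+Q).choose (Q+1)) := by
  have h : ∀ x : Fin (Q+2) → ℕ, suppCard x * suppCard x
      = ∑ i, ∑ j, if x i ≠ 0 ∧ x j ≠ 0 then 1 else 0 := by
    intro x
    rw [suppCard, Finset.card_filter, Finset.sum_mul_sum]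
    congr 1; funext i; congr 1; funext j
    by_cases h1 : x i ≠ 0 <;> by_cases h2 : x j ≠ 0 <;> simp [h1, h2]
  simp only [h]
  rw [Finset.sum_comm]
  have h2 : ∀ i : Fin (Q+2),
      (∑ x ∈ simplex (Q+2) (M+1), ∑ j, if x i ≠ 0 ∧ x j ≠ 0 then 1 else 0)
      = (M+Q+1).choose (Q+1) + (Q+1) * (M+Q).choose (Q+1) := by
    intro i
    rw [Finset.sum_comm]
    have h3 : ∀ j : Fin (Q+2),
        (∑ x ∈ simplex (Q+2) (M+1), if x i ≠ 0 ∧ x j ≠ 0 then 1 else 0)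
        = ((simplex (Q+2) (M+1)).filter fun x => x i ≠ 0 ∧ x j ≠ 0).card := by
      intro j; rw [← Finset.card_filter]
    rw [Finset.sum_congr rfl fun j _ => h3 j,
      ← Finset.add_sum_erase Finset.univ _ (Finset.mem_univ i)]
    congr 1
    · rw [show ((simplex (Q+2) (M+1)).filter fun x => x i ≠ 0 ∧ x i ≠ 0)
          = ((simplex (Q+2) (M+1)).filter fun x => x i ≠ 0) by
        apply Finset.filter_congr; intro x _; simp, cardB]
    · have h4 : ∀ j ∈ Finset.univ.erase i,
          ((simplex (Q+2) (M+1)).filter fun x => x i ≠ 0 ∧ x j ≠ 0).card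
          = (M+Q).choose (Q+1) := by
        intro j hj
        exact cardC M Q i j (Ne.symm (Finset.mem_erase.mp hj).1)
      rw [Finset.sum_congr rfl h4, Finset.sum_const,
        Finset.card_erase_of_mem (Finset.mem_univ i), Finset.card_univ,
        Fintype.card_fin, smul_eq_mul]
      congr 1
  rw [Finset.sum_congr rfl fun i _ => h2 i, Finset.sum_const, Finset.card_univ,
    Fintype.card_fin, smul_eq_mul]

end counts


lemma cheb_aux {α : Type*} (s : Finset α) (f : α → ℝ) (μ ε : ℝ) (hε : 0 < ε)
    (h0 : 0 < (s.card : ℝ)) :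
    ((s.filter fun x => ε < |f x - μ|).card : ℝ) / (s.card : ℝ)
      ≤ (∑ x ∈ s, (f x - μ)^2) / ((s.card : ℝ) * ε^2) := by
  rw [div_le_div_iff₀ h0 (by positivity)]
  have h1 : ε^2 * ((s.filter fun x => ε < |f x - μ|).card : ℝ)
      ≤ ∑ x ∈ s, (f x - μ)^2 :=
    calc ε^2 * ((s.filter fun x => ε < |f x - μ|).card : ℝ)
        = ∑ _x ∈ s.filter fun x => ε < |f x - μ|, ε^2 := by
          rw [Finset.sum_const, nsmul_eq_mul, mul_comm]
      _ ≤ ∑ x ∈ s.filter fun x => ε < |f x - μ|, (f x - μ)^2 :=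
          Finset.sum_le_sum (fun x hx => by
            rw [Finset.mem_filter] at hx
            calc ε^2 ≤ |f x - μ|^2 := pow_le_pow_left₀ hε.le hx.2.le 2
              _ = (f x - μ)^2 := sq_abs _)
      _ ≤ ∑ x ∈ s, (f x - μ)^2 :=
          Finset.sum_le_sum_of_subset_of_nonneg (Finset.filter_subset _ _)
            (fun x _ _ => sq_nonneg _)
  calc ((s.filter fun x => ε < |f x - μ|).card : ℝ) * ((s.card : ℝ) * ε^2)
      = (ε^2 * ((s.filter fun x => ε < |f x - μ|).card : ℝ)) * (s.card : ℝ) := by ring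
    _ ≤ (∑ x ∈ s, (f x - μ)^2) * (s.card : ℝ) :=
        mul_le_mul_of_nonneg_right h1 h0.le

set_option maxHeartbeats 1000000 in
/-- Concentration of the support size on the simplex: for `X` uniform on `S_{q,N}` and
`S = |supp(X)|/q`, one has
`P[|S - N/(N+q-1)| > ε] ≤ N(N-1)(q-1)/(ε² q (N+q-1)² (N+q-2))`. -/
theorem simplex_support_concentration (q N : ℕ) (hq : 2 ≤ q) (hN : 1 ≤ N)
    (ε : ℝ) (hε : 0 < ε) :
    (((simplex q N).filter fun x =>
        ε < |(suppCard x : ℝ) / (q : ℝ) - (N : ℝ) / ((N : ℝ) + (q : ℝ) - 1)|).card : ℝ) /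
        ((simplex q N).card : ℝ) ≤
      (N : ℝ) * ((N : ℝ) - 1) * ((q : ℝ) - 1) /
        (ε ^ 2 * (q : ℝ) * ((N : ℝ) + (q : ℝ) - 1) ^ 2 * ((N : ℝ) + (q : ℝ) - 2)) := by
  obtain ⟨M, rfl⟩ : ∃ M, N = M + 1 := ⟨N - 1, by omega⟩
  obtain ⟨Q, rfl⟩ : ∃ Q, q = Q + 2 := ⟨q - 2, by omega⟩
  have hApos : 0 < (M+Q+2).choose (Q+1) := Nat.choose_pos (by omega)
  have hcard : ((simplex (Q+2) (M+1)).card : ℝ) = ((M+Q+2).choose (Q+1) : ℝ) := by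
    exact_mod_cast cardA M Q
  have h0 : 0 < ((simplex (Q+2) (M+1)).card : ℝ) := by
    rw [hcard]; exact_mod_cast hApos
  refine le_trans (cheb_aux (simplex (Q+2) (M+1))
    (fun x => (suppCard x : ℝ) / ((Q+2 : ℕ) : ℝ))
    (((M+1 : ℕ) : ℝ) / (((M+1 : ℕ) : ℝ) + ((Q+2 : ℕ) : ℝ) - 1)) ε hε h0) ?_
  set k : ℝ := ((Q+2 : ℕ) : ℝ) with hk
  set μ : ℝ := ((M+1 : ℕ) : ℝ) / (((M+1 : ℕ) : ℝ) + ((Q+2 : ℕ) : ℝ) - 1) with hμ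
  set a : ℝ := ((M+Q+2).choose (Q+1) : ℝ) with ha
  set b : ℝ := ((M+Q+1).choose (Q+1) : ℝ) with hb
  set c : ℝ := ((M+Q).choose (Q+1) : ℝ) with hc
  have ha0 : 0 < a := by rw [ha]; exact_mod_cast hApos
  have hkval : k = (Q : ℝ) + 2 := by rw [hk]; push_cast; ring
  have hk0 : k ≠ 0 := by rw [hkval]; positivity
  have hμval : μ = ((M : ℝ) + 1) / ((M : ℝ) + (Q : ℝ) + 2) := by
    rw [hμ]; push_cast; ring_nf
  have hab : ((M:ℝ)+1) * a = ((M:ℝ)+(Q:ℝ)+2) * b := by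
    rw [ha, hb]
    have := ratioAB M Q
    have h2 : (((M+1) * (M+Q+2).choose (Q+1) : ℕ) : ℝ)
        = (((M+Q+2) * (M+Q+1).choose (Q+1) : ℕ) : ℝ) := by exact_mod_cast this
    push_cast at h2
    linarith
  have hbc : (M:ℝ) * b = ((M:ℝ)+(Q:ℝ)+1) * c := by
    rw [hb, hc]
    have := ratioBC M Q
    have h2 : ((M * (M+Q+1).choose (Q+1) : ℕ) : ℝ)
        = (((M+Q+1) * (M+Q).choose (Q+1) : ℕ) : ℝ) := by exact_mod_cast this
    push_cast at h2
    linarith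
  have hbf : b = ((M:ℝ)+1) * a / ((M:ℝ)+(Q:ℝ)+2) := by
    rw [eq_div_iff (by positivity)]
    linarith [hab]
  have hcf : c = (M:ℝ) * ((M:ℝ)+1) * a / (((M:ℝ)+(Q:ℝ)+2) * ((M:ℝ)+(Q:ℝ)+1)) := by
    rw [eq_div_iff (by positivity)]
    have h3 : (M:ℝ) * b * ((M:ℝ)+(Q:ℝ)+2) = ((M:ℝ)+(Q:ℝ)+1) * c * ((M:ℝ)+(Q:ℝ)+2) := by
      rw [hbc]
    rw [hbf] at h3
    have h4 : ((M:ℝ)+(Q:ℝ)+2) ≠ 0 := by positivity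
    field_simp at h3
    linarith [h3]
  have hS1 : ∑ x ∈ simplex (Q+2) (M+1), (suppCard x : ℝ) = ((Q:ℝ)+2) * b := by
    rw [hb]
    have h2 : ((∑ x ∈ simplex (Q+2) (M+1), suppCard x : ℕ) : ℝ)
        = (((Q+2) * (M+Q+1).choose (Q+1) : ℕ) : ℝ) := by exact_mod_cast sumSupp M Q
    push_cast at h2
    convert h2 using 2
  have hS2 : ∑ x ∈ simplex (Q+2) (M+1), (suppCard x : ℝ)^2
      = ((Q:ℝ)+2) * (b + ((Q:ℝ)+1) * c) := by
    rw [hb, hc]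
    have h2 : ((∑ x ∈ simplex (Q+2) (M+1), suppCard x * suppCard x : ℕ) : ℝ)
        = (((Q+2) * ((M+Q+1).choose (Q+1) + (Q+1) * (M+Q).choose (Q+1)) : ℕ) : ℝ) := by
      exact_mod_cast sumSuppSq M Q
    push_cast at h2
    rw [← h2]
    apply Finset.sum_congr rfl
    intro x _
    ring
  have hexpand : ∑ x ∈ simplex (Q+2) (M+1), ((suppCard x : ℝ)/k - μ)^2
      = (∑ x ∈ simplex (Q+2) (M+1), (suppCard x : ℝ)^2) * (1/k^2)
        - (∑ x ∈ simplex (Q+2) (M+1), (suppCard x : ℝ)) * (2*μ/k)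
        + ((simplex (Q+2) (M+1)).card : ℝ) * μ^2 := by
    have point : ∀ t : ℝ, (t/k - μ)^2 = t^2*(1/k^2) - t*(2*μ/k) + μ^2 := by
      intro t; field_simp; ring
    rw [Finset.sum_congr rfl fun x _ => point _, Finset.sum_add_distrib,
      Finset.sum_sub_distrib, ← Finset.sum_mul, ← Finset.sum_mul, Finset.sum_const,
      nsmul_eq_mul]
  apply le_of_eq
  have h1 : (M:ℝ)+(Q:ℝ)+2 ≠ 0 := by positivity
  have h2 : (M:ℝ)+(Q:ℝ)+1 ≠ 0 := by positivity
  have h5 : (Q:ℝ)+2 ≠ 0 := by positivity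
  have hε' : ε ≠ 0 := ne_of_gt hε
  have key : (((Q:ℝ)+2) * (b + ((Q:ℝ)+1)*c)) * (1/((Q:ℝ)+2)^2)
      - (((Q:ℝ)+2)*b) * (2*((((M:ℝ)+1))/(((M:ℝ)+(Q:ℝ)+2)))/((Q:ℝ)+2))
      + a * ((((M:ℝ)+1))/(((M:ℝ)+(Q:ℝ)+2)))^2
      = a * ((((M:ℝ)+1))*(M:ℝ)*(((Q:ℝ)+1)))
        / ((((Q:ℝ)+2))*(((M:ℝ)+(Q:ℝ)+2))^2*(((M:ℝ)+(Q:ℝ)+1))) := by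
    rw [hbf, hcf]
    field_simp
    ring
  rw [hexpand, hS1, hS2, hcard, hμval, hkval, key]
  push_cast
  have ha' : a ≠ 0 := ne_of_gt ha0
  rw [show ((M:ℝ) + 1 + ((Q:ℝ) + 2) - 1) = (M:ℝ)+(Q:ℝ)+2 by ring,
    show ((M:ℝ) + 1 + ((Q:ℝ) + 2) - 2) = (M:ℝ)+(Q:ℝ)+1 by ring,
    show ((M:ℝ) + 1 - 1) = (M:ℝ) by ring,
    show ((Q:ℝ) + 2 - 1) = (Q:ℝ)+1 by ring]
  rw [div_div, div_eq_div_iff (by positivity) (by positivity)]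
  ring
end

section
/- Ball-size bound on the simplex: Let q ≥ 1, N ≥ 1 and r ≥ 0 be integers, let n ∈ S_{q,N}, and set m = |supp(n)|. Then the number of points y ∈ S_{q,N} with (1/2)∑_i |n_i − y_i| ≤ r is at most ∑_{j=0}^{r} C(j+m−1, m−1)·C(j+q−1, q−1). -/
open scoped BigOperators Classical

/-!
A point `y` of the ball around `n` is determined by the pair `(n - y, y - n)` of truncated
differences, since `y = n - (n - y) + (y - n)`. As `y` and `n` have the same coordinate sum,
both differences have the same sum `j`, which is exactly the ℓ1-distance, so `j ≤ r`;
moreover `n - y` is supported in `supp n`. Counting the pairs by stars and bars gives the bound.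
-/

open Finset

namespace Finset

lemma card_piAntidiag_nat_eq_choose {ι : Type*} [DecidableEq ι] (s : Finset ι) (j : ℕ) :
    #(piAntidiag s j) = (#s + j - 1).choose j := by
  rw [← card_finsuppAntidiag_nat_eq_choose, finsuppAntidiag, card_map, card_attach]

-- Only an inequality: for `s = ∅` and `j > 0` the right side is `(j - 1).choose 0 = 1`.
lemma card_piAntidiag_nat_le {ι : Type*} [DecidableEq ι] (s : Finset ι) (j : ℕ) :
    #(piAntidiag s j) ≤ (j + #s - 1).choose (#s - 1) := by
  rw [card_piAntidiag_nat_eq_choose]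
  rcases Nat.eq_zero_or_pos #s with hs | hs
  · rcases j with _ | j <;> simp [hs]
  · rw [show j + #s - 1 = #s + j - 1 by omega]
    exact (Nat.choose_symm_of_eq_add (by omega)).le

end Finset

section TruncatedDifferences

variable {ι : Type*}

lemma tsub_tsub_add_tsub (f g : ι → ℕ) : f - (f - g) + (g - f) = g := by
  ext i
  simp only [Pi.add_apply, Pi.sub_apply]
  omega

variable [Fintype ι]

lemma sum_tsub_eq_sum_tsub_of_sum_eq {f g : ι → ℕ} (h : ∑ i, f i = ∑ i, g i) :
    ∑ i, (f - g) i = ∑ i, (g - f) i := by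
  have hmax : ∑ i, (g i + (f - g) i) = ∑ i, (f i + (g - f) i) :=
    sum_congr rfl fun i _ => by simp only [Pi.sub_apply, add_tsub_eq_max, max_comm]
  rw [sum_add_distrib, sum_add_distrib, h] at hmax
  omega

lemma abs_natCast_sub_natCast (a b : ℕ) :
    |(a : ℝ) - b| = ((a - b : ℕ) : ℝ) + ((b - a : ℕ) : ℝ) := by
  rcases le_total a b with h | h
  · rw [abs_of_nonpos (by simpa using h), Nat.sub_eq_zero_of_le h, Nat.cast_sub h]
    ring
  · rw [abs_of_nonneg (by simpa using h), Nat.sub_eq_zero_of_le h, Nat.cast_sub h]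
    ring

lemma half_sum_abs_sub_eq_sum_tsub {f g : ι → ℕ} (h : ∑ i, f i = ∑ i, g i) :
    (∑ i, |(f i : ℝ) - g i|) / 2 = ((∑ i, (g - f) i : ℕ) : ℝ) := by
  simp only [abs_natCast_sub_natCast, sum_add_distrib, ← Nat.cast_sum]
  rw [show ∑ i, (f i - g i) = ∑ i, (g - f) i from sum_tsub_eq_sum_tsub_of_sum_eq h]
  simp only [Pi.sub_apply]
  ring

variable [DecidableEq ι]

lemma tsub_mem_piAntidiag_support (f g : ι → ℕ) :
    f - g ∈ piAntidiag (univ.filter (f · ≠ 0)) (∑ i, (f - g) i) := by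
  refine mem_piAntidiag.2 ⟨sum_subset (subset_univ _) fun i _ hi => ?_, fun i hi => ?_⟩
  · simp_all
  · simp only [Pi.sub_apply, ne_eq] at hi
    simp only [mem_filter, mem_univ, true_and]
    omega

lemma tsub_pair_mem_biUnion {f g : ι → ℕ} (h : ∑ i, f i = ∑ i, g i) {r : ℕ}
    (hr : (∑ i, |(f i : ℝ) - g i|) / 2 ≤ r) :
    (f - g, g - f) ∈ (range (r + 1)).biUnion
      fun j => piAntidiag (univ.filter (f · ≠ 0)) j ×ˢ piAntidiag univ j := by
  rw [half_sum_abs_sub_eq_sum_tsub h, Nat.cast_le] at hr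
  refine mem_biUnion.2 ⟨∑ i, (g - f) i, mem_range.2 (by omega), mem_product.2 ⟨?_, ?_⟩⟩
  · rw [← sum_tsub_eq_sum_tsub_of_sum_eq h]
    exact tsub_mem_piAntidiag_support f g
  · simp

end TruncatedDifferences

theorem simplex_ball_size_bound_general (q N r : ℕ)
    (n : Fin q → ℕ) (hn : n ∈ simplex q N) :
    ((simplex q N).filter fun y => (∑ i, |(n i : ℝ) - (y i : ℝ)|) / 2 ≤ (r : ℝ)).card ≤
      ∑ j ∈ Finset.range (r + 1),
        (j + suppCard n - 1).choose (suppCard n - 1) * (j + q - 1).choose (q - 1) := by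
  have hsum : ∀ y ∈ simplex q N, ∑ i, n i = ∑ i, y i := fun y hy => by
    rw [simplex, Nat.mem_antidiagonalTuple] at hn hy
    rw [hn, hy]
  calc _ ≤ #((range (r + 1)).biUnion
          fun j => piAntidiag (univ.filter (n · ≠ 0)) j ×ˢ piAntidiag univ j) := by
        refine card_le_card_of_injOn (fun y => (n - y, y - n)) (fun y hy => ?_)
          fun y _ z _ hyz => ?_
        · obtain ⟨hy, hr⟩ := mem_filter.1 hy
          exact tsub_pair_mem_biUnion (hsum y hy) hr
        · obtain ⟨hneg, hpos⟩ := Prod.mk.inj hyz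
          rw [← tsub_tsub_add_tsub n y, hneg, hpos, tsub_tsub_add_tsub]
    _ ≤ ∑ j ∈ range (r + 1),
          #(piAntidiag (univ.filter (n · ≠ 0)) j ×ˢ piAntidiag univ j) :=
        card_biUnion_le
    _ ≤ _ := sum_le_sum fun j _ => by
        rw [card_product]
        exact Nat.mul_le_mul (card_piAntidiag_nat_le _ j)
          (by simpa using card_piAntidiag_nat_le (univ : Finset (Fin q)) j)

/-- Ball-size bound on the simplex: for `n ∈ S_{q,N}` with support size `m`, the number of
points of `S_{q,N}` at ℓ1-distance at most `r` from `n` is at most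
`∑_{j=0}^{r} C(j+m-1, m-1) C(j+q-1, q-1)`. -/
theorem simplex_ball_size_bound (q N r : ℕ) (hq : 1 ≤ q) (hN : 1 ≤ N)
    (n : Fin q → ℕ) (hn : n ∈ simplex q N) :
    ((simplex q N).filter fun y => (∑ i, |(n i : ℝ) - (y i : ℝ)|) / 2 ≤ (r : ℝ)).card ≤
      ∑ j ∈ Finset.range (r + 1),
        (j + suppCard n - 1).choose (suppCard n - 1) * (j + q - 1).choose (q - 1) :=
  simplex_ball_size_bound_general q N r n hn
end
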